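/- Let G be a finite connected undirected simple graph and let r ∈ V(G) be a cut vertex whose removal splits G into connected components with vertex sets C_1, …, C_l (l ≥ 2), and let V_i := Σ_{j≠i} |C_j|. Then the total dependency on r satisfies Σ_{s∈V(G)} δ_{s•}(r) ≥ Σ_{i=1}^{l} |C_i| · V_i. -/

import Mathlib

open Finset

/-- Number of shortest paths between `s` and `t`: paths of length `dist s t`. -/
noncomputable def nsp {V : Type*} (G : SimpleGraph V) (s t : V) : ℕ :=
  Nat.card {p : G.Walk s t // p.IsPath ∧ p.length = G.dist s t}

/-- Number of shortest paths between `s` and `t` passing through `x`. -/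
noncomputable def nspThrough {V : Type*} (G : SimpleGraph V) (s t x : V) : ℕ :=
  Nat.card {p : G.Walk s t // (p.IsPath ∧ p.length = G.dist s t) ∧ x ∈ p.support}

/-- Pair dependency δ_{st}(x) = σ_{st}(x)/σ_{st} (zero when x ∈ {s,t};
division by zero gives 0). -/
noncomputable def pairDep {V : Type*} [DecidableEq V] (G : SimpleGraph V)
    (s t x : V) : ℝ :=
  if x = s ∨ x = t then 0 else (nspThrough G s t x : ℝ) / (nsp G s t : ℝ)

/-- Dependency score δ_{s•}(x) = Σ_{t ∉ {s,x}} δ_{st}(x); in particular δ_{x•}(x) = 0. -/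
noncomputable def depScore {V : Type*} [Fintype V] [DecidableEq V]
    (G : SimpleGraph V) (s x : V) : ℝ :=
  ∑ t ∈ Finset.univ \ {s, x}, pairDep G s t x

/-- Betweenness centrality BC(x) = (1/(n(n-1))) Σ_{s ≠ x} δ_{s•}(x). -/
noncomputable def bc {V : Type*} [Fintype V] [DecidableEq V]
    (G : SimpleGraph V) (x : V) : ℝ :=
  (1 / ((Fintype.card V : ℝ) * ((Fintype.card V : ℝ) - 1))) *
    ∑ s ∈ Finset.univ \ {x}, depScore G s x

/-- `C : Fin l → Finset V` is the family of vertex sets of the connected components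
of `G − r`: each `C i` is nonempty, they are pairwise disjoint, they cover
`V(G) ∖ {r}`, and two vertices lie in the same `C i` iff they are joined by a walk
of `G` avoiding `r`. -/
def IsCompFamily {V : Type*} (G : SimpleGraph V) (r : V)
    {l : ℕ} (C : Fin l → Finset V) : Prop :=
  (∀ i, (C i).Nonempty) ∧
  (∀ v : V, v ≠ r ↔ ∃ i, v ∈ C i) ∧
  (∀ i j, i ≠ j → Disjoint (C i) (C j)) ∧
  (∀ i, ∀ u ∈ C i, ∀ v : V, (v ∈ C i ↔ ∃ p : G.Walk u v, r ∉ p.support))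

/-! Every walk between two different components of `G − r` passes through `r`, so for
`s ∈ C_i` and `t ∈ C_j` with `i ≠ j` all shortest `s`–`t` paths pass through `r` and
`δ_{st}(r) = 1`. Hence `δ_{s•}(r) ≥ V_i` for every `s ∈ C_i`; summing over `s` gives the bound. -/

section

variable {V : Type*} {G : SimpleGraph V}

lemma pairDep_nonneg [DecidableEq V] (s t x : V) : 0 ≤ pairDep G s t x := by
  unfold pairDep
  split <;> positivity

lemma depScore_nonneg [Fintype V] [DecidableEq V] (s x : V) : 0 ≤ depScore G s x :=
  Finset.sum_nonneg fun t _ => pairDep_nonneg s t x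

lemma pairDep_eq_one_of_forall_mem_support [Fintype V] [DecidableEq V] {s t x : V}
    (hst : G.Reachable s t) (hs : x ≠ s) (ht : x ≠ t)
    (hall : ∀ p : G.Walk s t, x ∈ p.support) : pairDep G s t x = 1 := by
  classical
  obtain ⟨p, hp⟩ := hst.exists_path_of_dist
  have : Nonempty {p : G.Walk s t // p.IsPath ∧ p.length = G.dist s t} := ⟨⟨p, hp⟩⟩
  have hpos : 0 < nsp G s t := Nat.card_pos
  have hthrough : nspThrough G s t x = nsp G s t :=
    Nat.card_congr (Equiv.subtypeEquivRight fun p => and_iff_left (hall p))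
  rw [pairDep, if_neg (not_or.2 ⟨hs, ht⟩), hthrough, div_self (by exact_mod_cast hpos.ne')]

namespace IsCompFamily

variable {r : V} {l : ℕ} {C : Fin l → Finset V}

lemma ne_of_mem (hC : IsCompFamily G r C) {i : Fin l} {v : V} (hv : v ∈ C i) : v ≠ r :=
  (hC.2.1 v).2 ⟨i, hv⟩

lemma pairwiseDisjoint (hC : IsCompFamily G r C) (I : Set (Fin l)) : I.PairwiseDisjoint C :=
  fun a _ b _ hab => hC.2.2.1 a b hab

lemma mem_support_of_ne (hC : IsCompFamily G r C) {i j : Fin l} (hij : i ≠ j)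
    {s t : V} (hs : s ∈ C i) (ht : t ∈ C j) (p : G.Walk s t) : r ∈ p.support := by
  by_contra hr
  exact Finset.disjoint_left.1 (hC.2.2.1 i j hij) ((hC.2.2.2 i s hs t).2 ⟨p, hr⟩) ht

lemma pairDep_eq_one [Fintype V] [DecidableEq V] (hC : IsCompFamily G r C) (hconn : G.Connected)
    {i j : Fin l} (hij : i ≠ j) {s t : V} (hs : s ∈ C i) (ht : t ∈ C j) :
    pairDep G s t r = 1 :=
  pairDep_eq_one_of_forall_mem_support (hconn s t) (hC.ne_of_mem hs).symm
    (hC.ne_of_mem ht).symm (hC.mem_support_of_ne hij hs ht)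

lemma sum_card_compl_le_depScore [Fintype V] [DecidableEq V] (hC : IsCompFamily G r C)
    (hconn : G.Connected) {i : Fin l} {s : V} (hs : s ∈ C i) :
    ∑ j ∈ univ \ {i}, ((C j).card : ℝ) ≤ depScore G s r := by
  have hsub : (univ \ {i}).biUnion C ⊆ univ \ {s, r} := by
    intro t ht
    obtain ⟨j, hj, htj⟩ := mem_biUnion.1 ht
    have hji : j ≠ i := by simpa using hj
    simp only [mem_sdiff, mem_univ, mem_insert, mem_singleton, true_and, not_or]
    exact ⟨fun hts => Finset.disjoint_left.1 (hC.2.2.1 i j hji.symm) (hts ▸ hs) htj,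
      hC.ne_of_mem htj⟩
  calc ∑ j ∈ univ \ {i}, ((C j).card : ℝ)
      = ∑ j ∈ univ \ {i}, ∑ t ∈ C j, pairDep G s t r := by
        refine sum_congr rfl fun j hj => ?_
        have hji : j ≠ i := by simpa using hj
        rw [sum_congr rfl fun t ht => hC.pairDep_eq_one hconn hji.symm hs ht]
        simp
    _ = ∑ t ∈ (univ \ {i}).biUnion C, pairDep G s t r := (sum_biUnion (hC.pairwiseDisjoint _)).symm
    _ ≤ depScore G s r :=
        sum_le_sum_of_subset_of_nonneg hsub fun t _ _ => pairDep_nonneg s t r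

end IsCompFamily

end

theorem stmt_6_general {V : Type*} [Fintype V] [DecidableEq V] (G : SimpleGraph V)
    (hconn : G.Connected)
    (r : V) {l : ℕ} (C : Fin l → Finset V)
    (hC : IsCompFamily G r C) :
    ∑ i : Fin l, ((C i).card : ℝ) * (∑ j ∈ Finset.univ \ {i}, ((C j).card : ℝ)) ≤
      ∑ s : V, depScore G s r := by
  calc ∑ i : Fin l, ((C i).card : ℝ) * (∑ j ∈ univ \ {i}, ((C j).card : ℝ))
      = ∑ i : Fin l, ∑ s ∈ C i, ∑ j ∈ univ \ {i}, ((C j).card : ℝ) := by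
        simp only [sum_const, nsmul_eq_mul]
    _ ≤ ∑ i : Fin l, ∑ s ∈ C i, depScore G s r :=
        sum_le_sum fun i _ => sum_le_sum fun s hs => hC.sum_card_compl_le_depScore hconn hs
    _ = ∑ s ∈ univ.biUnion C, depScore G s r := (sum_biUnion (hC.pairwiseDisjoint _)).symm
    _ ≤ ∑ s : V, depScore G s r :=
        sum_le_univ_sum_of_nonneg fun s => depScore_nonneg s r

/-- the total dependency on the cut vertex r is at least
Σ_i |C_i| · V_i where V_i = Σ_{j≠i} |C_j|. -/
theorem stmt_6 {V : Type*} [Fintype V] [DecidableEq V] (G : SimpleGraph V)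
    (hconn : G.Connected)
    (r : V) {l : ℕ} (hl : 2 ≤ l) (C : Fin l → Finset V)
    (hC : IsCompFamily G r C) :
    ∑ i : Fin l, ((C i).card : ℝ) * (∑ j ∈ Finset.univ \ {i}, ((C j).card : ℝ)) ≤
      ∑ s : V, depScore G s r :=
  stmt_6_general G hconn r C hC
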